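/- Let m ≥ 1, let p : Fin (m+1) → ℝ^m be affinely independent, and let x lie in the convex hull of {p_0, …, p_m}. Define the barycentric weights w_j = A(Function.update p j x) / A(p) (ratios of sub-simplex volume to simplex volume). Then each w_j ≥ 0 and ∑_{j=0}^{m} w_j = 1. -/

import Mathlib

/-!
Replacing the vertex `p j` by `x` maps the simplex onto the sub-simplex by the affine map that
fixes every other vertex and sends `p j` to `x`, namely `y ↦ y + λⱼ(y) • (x - p j)` with `λⱼ` the
`j`-th barycentric coordinate. Its linear part is a transvection, of determinant
`1 + (λⱼ(x) - λⱼ(p j)) = λⱼ(x)`. Hence `A(update p j x) = |λⱼ(x)| A(p)`, and for `x` in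
the simplex the `λⱼ(x)` are nonnegative and sum to one.
-/

open MeasureTheory Set

/-- The `m`-dimensional volume of the convex hull of the range of a family of points
in `ℝ^m` (the "area" `A(p)` of the simplex with vertices `p`). -/
noncomputable def simVol {m : ℕ} (p : Fin (m + 1) → EuclideanSpace ℝ (Fin m)) : ℝ :=
  (volume (convexHull ℝ (Set.range p))).toReal

namespace AffineBasis

section Ring

variable {ι k E : Type*} [Ring k] [AddCommGroup E] [Module k E]

noncomputable def updateMap (b : AffineBasis ι k E) (j : ι) (x : E) : E →ᵃ[k] E where
  toFun y := y + b.coord j y • (x - b j)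
  linear := LinearMap.transvection (b.coord j).linear (x - b j)
  map_vadd' y v := by
    rw [AffineMap.map_vadd, LinearMap.transvection.apply, vadd_eq_add, vadd_eq_add, vadd_eq_add,
      add_smul]
    abel

variable (b : AffineBasis ι k E) (j : ι) (x : E)

theorem updateMap_apply [DecidableEq ι] (i : ι) :
    b.updateMap j x (b i) = Function.update b j x i := by
  rcases eq_or_ne i j with rfl | hij
  · simp [updateMap, coord_apply_eq]
  · simp [updateMap, coord_apply_ne b hij.symm, hij]

theorem range_update_eq_image_updateMap [DecidableEq ι] :
    range (Function.update b j x) = b.updateMap j x '' range b := by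
  rw [← range_comp]
  exact congrArg range (funext fun i => (b.updateMap_apply j x i).symm)

end Ring

theorem det_updateMap_linear {ι k E : Type*} [Field k] [AddCommGroup E] [Module k E]
    [FiniteDimensional k E] (b : AffineBasis ι k E) (j : ι) (x : E) :
    (b.updateMap j x).linear.det = b.coord j x := by
  change (LinearMap.transvection _ _).det = _
  rw [LinearMap.transvection.det, ← vsub_eq_sub, AffineMap.linearMap_vsub, coord_apply_eq]
  simp

end AffineBasis

section Measure

variable {E : Type*} [NormedAddCommGroup E] [NormedSpace ℝ E] [MeasurableSpace E]
  (μ : Measure E)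

theorem MeasureTheory.Measure.addHaar_image_affineMap [FiniteDimensional ℝ E] [BorelSpace E]
    [μ.IsAddHaarMeasure] (f : E →ᵃ[ℝ] E) (s : Set E) :
    μ (f '' s) = ENNReal.ofReal |f.linear.det| * μ s := by
  have : f '' s = (· + f 0) '' (f.linear '' s) := by
    rw [image_image]
    conv_lhs => rw [f.decomp]
    rfl
  rw [this, image_add_right, measure_preimage_add_right, Measure.addHaar_image_linearMap]

theorem AffineBasis.addHaar_convexHull_update [FiniteDimensional ℝ E] [BorelSpace E]
    [μ.IsAddHaarMeasure] {ι : Type*} [DecidableEq ι] (b : AffineBasis ι ℝ E) (j : ι) (x : E) :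
    μ (convexHull ℝ (range (Function.update b j x))) =
      ENNReal.ofReal |b.coord j x| * μ (convexHull ℝ (range b)) := by
  rw [b.range_update_eq_image_updateMap, ← AffineMap.image_convexHull,
    μ.addHaar_image_affineMap, b.det_updateMap_linear]

theorem AffineBasis.measure_convexHull_pos [FiniteDimensional ℝ E] [μ.IsOpenPosMeasure]
    {ι : Type*} (b : AffineBasis ι ℝ E) :
    0 < μ (convexHull ℝ (range b)) :=
  (isOpen_interior.measure_pos μ
    (interior_convexHull_nonempty_iff_affineSpan_eq_top.2 b.tot)).trans_le
    (measure_mono interior_subset)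

theorem AffineBasis.measure_convexHull_lt_top [IsFiniteMeasureOnCompacts μ] {ι : Type*}
    [Finite ι] (b : AffineBasis ι ℝ E) :
    μ (convexHull ℝ (range b)) < ⊤ :=
  ((finite_range b).isCompact_convexHull ℝ).measure_lt_top

end Measure

theorem simVol_update_div_simVol {m : ℕ}
    (b : AffineBasis (Fin (m + 1)) ℝ (EuclideanSpace ℝ (Fin m))) (j : Fin (m + 1))
    (x : EuclideanSpace ℝ (Fin m)) :
    simVol (Function.update b j x) / simVol b = |b.coord j x| := by
  have hpos : 0 < (volume (convexHull ℝ (range b))).toReal :=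
    ENNReal.toReal_pos (b.measure_convexHull_pos volume).ne'
      (b.measure_convexHull_lt_top volume).ne
  rw [simVol, simVol, b.addHaar_convexHull_update volume, ENNReal.toReal_mul,
    ENNReal.toReal_ofReal (abs_nonneg _), mul_div_cancel_right₀ _ hpos.ne']

theorem barycentric_weights_nonneg_sum_one_general {m : ℕ}
    (p : Fin (m + 1) → EuclideanSpace ℝ (Fin m)) (hp : AffineIndependent ℝ p)
    (x : EuclideanSpace ℝ (Fin m)) (hx : x ∈ convexHull ℝ (Set.range p)) :
    (∀ j : Fin (m + 1), 0 ≤ simVol (Function.update p j x) / simVol p) ∧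
      ∑ j : Fin (m + 1), simVol (Function.update p j x) / simVol p = 1 := by
  let b : AffineBasis (Fin (m + 1)) ℝ (EuclideanSpace ℝ (Fin m)) :=
    ⟨p, hp, hp.affineSpan_eq_top_iff_card_eq_finrank_add_one.2 (by simp)⟩
  have hcoord : ∀ j, 0 ≤ b.coord j x := by
    have hx' : x ∈ convexHull ℝ (range b) := hx
    rwa [b.convexHull_eq_nonneg_coord] at hx'
  have hweight (j) : simVol (Function.update p j x) / simVol p = b.coord j x := by
    rw [← abs_of_nonneg (hcoord j)]
    exact simVol_update_div_simVol b j x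
  simp only [hweight]
  exact ⟨hcoord, b.sum_coord_apply_eq_one x⟩

/-- Eq. (17): the barycentric weights `w_j = A(update p j x) / A(p)` of a point `x`
inside the simplex are nonnegative and sum to one. -/
theorem barycentric_weights_nonneg_sum_one {m : ℕ} (hm : 1 ≤ m)
    (p : Fin (m + 1) → EuclideanSpace ℝ (Fin m)) (hp : AffineIndependent ℝ p)
    (x : EuclideanSpace ℝ (Fin m)) (hx : x ∈ convexHull ℝ (Set.range p)) :
    (∀ j : Fin (m + 1), 0 ≤ simVol (Function.update p j x) / simVol p) ∧
      ∑ j : Fin (m + 1), simVol (Function.update p j x) / simVol p = 1 :=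
  barycentric_weights_nonneg_sum_one_general p hp x hx
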